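/- Let r_i and r_j be two uncovered requests with i>j, and suppose the quarter balls SQball(i) and SQball(j) are not edge-disjoint. Then (P1) ρ(i) ≥ 4·ρ(j), and (P2) v_j−ρ(j) ≤ v_i < u^s_j ≤ v_j. -/

import Mathlib

open Finset

/-- A replica is a pair `(v, t)` of a network node and a time. -/
abbrev Replica : Type := ℕ × ℕ

/-- A (directed) grid edge is a pair of replicas. -/
abbrev GEdge : Type := Replica × Replica

/-- Horizontal directed edge `((v,t),(v+1,t))`. -/
def isHoriz (e : GEdge) : Prop := e.2 = (e.1.1 + 1, e.1.2)

/-- Vertical arc `((v,t),(v,t+1))`. -/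
def isArc (e : GEdge) : Prop := e.2 = (e.1.1, e.1.2 + 1)

def isGridEdge (e : GEdge) : Prop := isHoriz e ∨ isArc e

/-- The quarter ball `B(r,ρ)`: replicas `(u,s)` with `u ≤ v`, `s ≤ t` and
`(v−u)+(t−s) ≤ ρ`. -/
def qball (r : Replica) (ρ : ℕ) : Set Replica :=
  {q | q.1 ≤ r.1 ∧ q.2 ≤ r.2 ∧ (r.1 - q.1) + (r.2 - q.2) ≤ ρ}

/-- Grid edges with both endpoints in the quarter ball `B(r,ρ)`. -/
def ballEdge (r : Replica) (ρ : ℕ) (e : GEdge) : Prop :=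
  isGridEdge e ∧ e.1 ∈ qball r ρ ∧ e.2 ∈ qball r ρ

/-- Two quarter balls are edge-disjoint if they share no grid edge. -/
def BallsEdgeDisjoint (r : Replica) (ρ : ℕ) (r' : Replica) (ρ' : ℕ) : Prop :=
  ∀ e : GEdge, ¬ (ballEdge r ρ e ∧ ballEdge r' ρ' e)

/-- The square `Sq(r,ρ) = [v−ρ,v] × [t−ρ,t]`. -/
def SqRect (r : Replica) (ρ : ℕ) : Set Replica :=
  {q | r.1 - ρ ≤ q.1 ∧ q.1 ≤ r.1 ∧ r.2 - ρ ≤ q.2 ∧ q.2 ≤ r.2}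

/-- Directed `L∞` distance `d∞(q,r)`: `max(v−u, t−s)` if `u ≤ v` and `s ≤ t`,
and `∞` otherwise. -/
def distInf (q r : Replica) : ℕ∞ :=
  if q.1 ≤ r.1 ∧ q.2 ≤ r.2 then ((max (r.1 - q.1) (r.2 - q.2) : ℕ) : ℕ∞) else ⊤

/-- The replicas of an edge set: `(0,0)` together with all endpoints of its edges. -/
def Repl (F : Finset GEdge) : Set Replica :=
  insert ((0, 0) : Replica) {q | ∃ e ∈ F, q = e.1 ∨ q = e.2}

/-- The arcs of the vertical path at node `u` from time `s` to time `τ`. -/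
def vertPath (u s τ : ℕ) : Finset GEdge :=
  (Finset.range (τ - s)).image (fun k => ((u, s + k), (u, s + k + 1)))

/-- The horizontal edges of the path at time `τ` from node `u` to node `w`. -/
def horizPath (τ u w : ℕ) : Finset GEdge :=
  (Finset.range (w - u)).image (fun k => ((u + k, τ), (u + k + 1, τ)))

/-- A directed path from `a` to `b` all of whose edges belong to `F`. -/
def PathIn (F : Finset GEdge) (a b : Replica) : Prop :=
  ∃ (L : ℕ) (f : ℕ → Replica), f 0 = a ∧ f L = b ∧ ∀ k < L, (f k, f (k + 1)) ∈ F

/-- An execution of Algorithm `Square` on a request sequence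
`r_1 = (v 1, t 1), …, r_N = (v N, t N)` (with `t 0 = 0` and nondecreasing times).
`sol i` is the edge set after handling request `i`; `ρ i` is the radius of
request `i`; `(u' i, s' i)` is its closest replica and `(us i, ss i)` its
serving replica.  The fields record the specification SQ1–SQ5. -/
structure SquareRun where
  N : ℕ
  v : ℕ → ℕ
  t : ℕ → ℕ
  ρ : ℕ → ℕ
  u' : ℕ → ℕ
  s' : ℕ → ℕ
  us : ℕ → ℕ
  ss : ℕ → ℕ
  sol : ℕ → Finset GEdge
  t_zero : t 0 = 0
  t_mono : ∀ i j, i ≤ j → j ≤ N → t i ≤ t j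
  sol_zero : sol 0 = ∅
  /-- SQ2: `ρ i` is a lower bound on the distance from every replica of the
  current solution (after the SQ1 additions) to `r_i`. -/
  rho_min : ∀ i, 1 ≤ i → i ≤ N →
    ∀ q ∈ Repl (sol (i - 1) ∪ vertPath 0 (t (i - 1)) (t i)),
      (ρ i : ℕ∞) ≤ distInf q (v i, t i)
  /-- SQ2: the closest replica belongs to the current solution. -/
  closest_mem : ∀ i, 1 ≤ i → i ≤ N →
    (u' i, s' i) ∈ Repl (sol (i - 1) ∪ vertPath 0 (t (i - 1)) (t i))
  /-- SQ2: the closest replica attains the radius. -/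
  closest_dist : ∀ i, 1 ≤ i → i ≤ N →
    distInf (u' i, s' i) (v i, t i) = (ρ i : ℕ∞)
  /-- SQ2: among replicas of node `u' i`, the closest replica is the latest. -/
  closest_late : ∀ i, 1 ≤ i → i ≤ N → ∀ s, s ≤ t i →
    (u' i, s) ∈ Repl (sol (i - 1) ∪ vertPath 0 (t (i - 1)) (t i)) → s ≤ s' i
  /-- SQ3: the serving replica is in the current solution and in `Sq(r_i, 5ρ i)`. -/
  serv_mem : ∀ i, 1 ≤ i → i ≤ N →
    (us i, ss i) ∈ Repl (sol (i - 1) ∪ vertPath 0 (t (i - 1)) (t i)) ∧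
      (us i, ss i) ∈ SqRect (v i, t i) (5 * ρ i)
  /-- SQ3: the serving node is leftmost. -/
  serv_min : ∀ i, 1 ≤ i → i ≤ N →
    ∀ q ∈ Repl (sol (i - 1) ∪ vertPath 0 (t (i - 1)) (t i)),
      q ∈ SqRect (v i, t i) (5 * ρ i) → us i ≤ q.1
  /-- SQ3: among those, the serving time is latest. -/
  serv_late : ∀ i, 1 ≤ i → i ≤ N →
    ∀ q ∈ Repl (sol (i - 1) ∪ vertPath 0 (t (i - 1)) (t i)),
      q ∈ SqRect (v i, t i) (5 * ρ i) → q.1 = us i → q.2 ≤ ss i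
  /-- SQ1 + SQ4 + SQ5: the edges added while handling request `i`. -/
  step : ∀ i, 1 ≤ i → i ≤ N →
    sol i = (sol (i - 1) ∪ vertPath 0 (t (i - 1)) (t i))
      ∪ vertPath (us i) (ss i) (t i) ∪ horizPath (t i) (us i) (v i)
      ∪ vertPath (us i) (t i) (t i + 4 * ρ i)

namespace SquareRun

variable (S : SquareRun)

/-- The `i`-th request replica. -/
def req (i : ℕ) : Replica := (S.v i, S.t i)

/-- The edges added in steps SQ4 and SQ5 while handling request `i`. -/
def added45 (i : ℕ) : Finset GEdge :=
  vertPath (S.us i) (S.ss i) (S.t i) ∪ horizPath (S.t i) (S.us i) (S.v i)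
    ∪ vertPath (S.us i) (S.t i) (S.t i + 4 * S.ρ i)

/-- Request `i` is covered if `v_i − u^s_i ≥ ρ(i)`. -/
def covered (i : ℕ) : Prop := S.ρ i ≤ S.v i - S.us i

def uncovered (i : ℕ) : Prop := ¬ S.covered i

/-- A feasible solution of the DMCD instance given by the requests of `S`. -/
def Feasible (F : Finset GEdge) : Prop :=
  (∀ e ∈ F, isGridEdge e) ∧
  (∀ i, 1 ≤ i → i ≤ S.N → PathIn F (0, 0) (S.req i)) ∧
  (∀ τ, τ < S.t S.N → ∃ w, ((w, τ), (w, τ + 1)) ∈ F)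

/-- `S.IsParent i j` means `parent(j) = i`:  `i` is the least index greater than
`j` such that `r_i` is uncovered and `SQball(j)`, `SQball(i)` are not
edge-disjoint. -/
def IsParent (i j : ℕ) : Prop :=
  1 ≤ j ∧ j < i ∧ i ≤ S.N ∧ S.uncovered j ∧ S.uncovered i ∧
    ¬ BallsEdgeDisjoint (S.req j) (S.ρ j) (S.req i) (S.ρ i) ∧
    ∀ k, j < k → k < i → S.uncovered k →
      BallsEdgeDisjoint (S.req j) (S.ρ j) (S.req k) (S.ρ k)

/-- A root: an uncovered request with no parent. -/
def IsRoot (i : ℕ) : Prop :=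
  1 ≤ i ∧ i ≤ S.N ∧ S.uncovered i ∧
    ∀ j, i < j → j ≤ S.N → S.uncovered j →
      BallsEdgeDisjoint (S.req i) (S.ρ i) (S.req j) (S.ρ j)

/-- `i ∈ Tree(iStar)`: one can go from `i` to `iStar` by repeatedly passing from
a child to its parent. -/
def InTree (i iStar : ℕ) : Prop :=
  Relation.ReflTransGen (fun a b => S.IsParent b a) i iStar

end SquareRun

/-!
Since the two quarter balls meet, `r_i` lies within `ρ(i)` of `r_j` in both coordinates. Every
argument then plays the leftmost choice of serving nodes (SQ3) against the minimality of radii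
(SQ2): a replica of an earlier solution at node `v_i − ρ(i)` inside `Sq(r_i, 5ρ(i))` would make
`r_i` covered, and one at node `u > v_i − ρ(i)` within time `ρ(i)` below `r_i` would contradict
the choice of `ρ(i)`.

(P2): if `u^s_j ≤ v_i`, either the SQ4 row of `r_j` crosses node `v_i − ρ(i)`, or the SQ5 column
of `r_j` reaches within time `ρ(i)` below `r_i` at a node to the right of `v_i − ρ(i)`.

(P1): if `ρ(i) < 4ρ(j)`, induction over the requests `j, …, i−1` shows that no replica at a node
in `[v_i − ρ(i), v_i]` is later than `t_j − 5ρ(j)`. For `r_j`, such a replica (lowered to time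
`t_j`) would lie in `Sq(r_j, 5ρ(j))` left of `u^s_j`; a later request creating one is served
either from the left of `v_i − ρ(i)` or from a replica older than `t_j − 5ρ(j)`, and the latter
forces a radius above `ρ(j)`, whose SQ5 column then reaches time `t_i`. The closest replica of
`r_i` would be such a replica.
-/

lemma mem_Repl_iff {F : Finset GEdge} {q : Replica} :
    q ∈ Repl F ↔ q = (0, 0) ∨ ∃ e ∈ F, q = e.1 ∨ q = e.2 :=
  Iff.rfl

lemma Repl_mono {F G : Finset GEdge} (h : F ⊆ G) : Repl F ⊆ Repl G :=
  Set.insert_subset_insert fun _ ⟨e, he, hq⟩ => ⟨e, h he, hq⟩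

lemma Repl_union (F G : Finset GEdge) : Repl (F ∪ G) = Repl F ∪ Repl G := by
  rw [Repl, Repl, Repl, ← Set.insert_union_distrib]
  congr 1
  ext q
  simp only [Finset.mem_union, Set.mem_union, Set.mem_ofPred_eq, or_and_right, exists_or]

lemma mem_Repl_vertPath {u s τ a b : ℕ} :
    ((a, b) : Replica) ∈ Repl (vertPath u s τ) ↔
      (a = 0 ∧ b = 0) ∨ (a = u ∧ s ≤ b ∧ b ≤ τ ∧ s < τ) := by
  simp only [mem_Repl_iff, vertPath, Finset.mem_image, Finset.mem_range,
    exists_exists_and_eq_and, Prod.mk.injEq]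
  constructor
  · rintro (h | ⟨k, hk, h | h⟩) <;> omega
  · rintro (h | ⟨rfl, h1, h2, h3⟩)
    · exact Or.inl h
    · rcases lt_or_eq_of_le h2 with h | rfl
      · exact Or.inr ⟨b - s, by omega, Or.inl ⟨rfl, by omega⟩⟩
      · exact Or.inr ⟨b - 1 - s, by omega, Or.inr ⟨rfl, by omega⟩⟩

lemma mem_Repl_horizPath {τ u w a b : ℕ} :
    ((a, b) : Replica) ∈ Repl (horizPath τ u w) ↔
      (a = 0 ∧ b = 0) ∨ (u ≤ a ∧ a ≤ w ∧ b = τ ∧ u < w) := by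
  simp only [mem_Repl_iff, horizPath, Finset.mem_image, Finset.mem_range,
    exists_exists_and_eq_and, Prod.mk.injEq]
  constructor
  · rintro (h | ⟨k, hk, h | h⟩) <;> omega
  · rintro (h | ⟨h1, h2, rfl, h3⟩)
    · exact Or.inl h
    · rcases lt_or_eq_of_le h2 with h | rfl
      · exact Or.inr ⟨a - u, by omega, Or.inl ⟨by omega, rfl⟩⟩
      · exact Or.inr ⟨a - 1 - u, by omega, Or.inr ⟨by omega, rfl⟩⟩

lemma le_distInf_iff {n a b v t : ℕ} (ha : a ≤ v) (hb : b ≤ t) :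
    (n : ℕ∞) ≤ distInf (a, b) (v, t) ↔ n ≤ v - a ∨ n ≤ t - b := by
  simp only [distInf, ha, hb, and_self, if_true, Nat.cast_le, le_max_iff]

lemma le_of_distInf_eq {n a b v t : ℕ} (h : distInf (a, b) (v, t) = n) :
    a ≤ v ∧ b ≤ t ∧ v - a ≤ n ∧ t - b ≤ n := by
  unfold distInf at h
  split_ifs at h with hab
  · have hmax : max (v - a) (t - b) = n := by exact_mod_cast h
    exact ⟨hab.1, hab.2, hmax ▸ le_max_left _ _, hmax ▸ le_max_right _ _⟩
  · exact absurd h (ENat.top_ne_natCast n)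

lemma exists_mem_qball_of_not_disjoint {r r' : Replica} {ρ ρ' : ℕ}
    (h : ¬ BallsEdgeDisjoint r ρ r' ρ') : ∃ q, q ∈ qball r ρ ∧ q ∈ qball r' ρ' := by
  simp only [BallsEdgeDisjoint, not_forall, not_not] at h
  obtain ⟨e, he, he'⟩ := h
  exact ⟨e.1, he.2.1, he'.2.1⟩

lemma le_add_of_mem_qball {v t v' t' ρ ρ' : ℕ} {q : Replica} (hq : q ∈ qball (v, t) ρ)
    (hq' : q ∈ qball (v', t') ρ') : v ≤ v' + ρ ∧ t ≤ t' + ρ := by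
  obtain ⟨-, -, h⟩ := hq
  obtain ⟨h1, h2, -⟩ := hq'
  dsimp only at h h1 h2
  omega

lemma zero_mem_Repl (F : Finset GEdge) : ((0, 0) : Replica) ∈ Repl F :=
  Set.mem_insert _ _

namespace SquareRun

variable (S : SquareRun)

/-- The replicas from which request `i` is served: those of the solution after step SQ1. -/
def curRepl (i : ℕ) : Set Replica :=
  Repl (S.sol (i - 1) ∪ vertPath 0 (S.t (i - 1)) (S.t i))

lemma sol_eq_union {m : ℕ} (hm : 1 ≤ m) (hmN : m ≤ S.N) :
    S.sol m = (S.sol (m - 1) ∪ vertPath 0 (S.t (m - 1)) (S.t m)) ∪ S.added45 m := by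
  rw [S.step m hm hmN, added45]
  simp only [Finset.union_assoc]

lemma Repl_sol_eq {m : ℕ} (hm : 1 ≤ m) (hmN : m ≤ S.N) :
    Repl (S.sol m) = S.curRepl m ∪ Repl (S.added45 m) := by
  rw [S.sol_eq_union hm hmN, Repl_union, curRepl]

lemma sol_mono {a b : ℕ} (hab : a ≤ b) (hbN : b ≤ S.N) : S.sol a ⊆ S.sol b := by
  induction b, hab using Nat.le_induction with
  | base => exact subset_rfl
  | succ b _ ih =>
    refine (ih (by omega)).trans ?_
    rw [S.sol_eq_union (by omega) hbN, Nat.add_sub_cancel]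
    exact Finset.subset_union_left.trans Finset.subset_union_left

lemma Repl_sol_subset_curRepl {m i : ℕ} (hmi : m < i) (hiN : i ≤ S.N) :
    Repl (S.sol m) ⊆ S.curRepl i :=
  Repl_mono ((S.sol_mono (by omega) (by omega)).trans Finset.subset_union_left)

lemma curRepl_subset_Repl_sol {m : ℕ} (hm : 1 ≤ m) (hmN : m ≤ S.N) :
    S.curRepl m ⊆ Repl (S.sol m) := by
  rw [S.Repl_sol_eq hm hmN]
  exact Set.subset_union_left

lemma mem_curRepl {m a b : ℕ} (h : ((a, b) : Replica) ∈ S.curRepl m) :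
    ((a, b) : Replica) ∈ Repl (S.sol (m - 1)) ∨ (a = 0 ∧ b ≤ S.t m) := by
  rw [curRepl, Repl_union, Set.mem_union, mem_Repl_vertPath] at h
  rcases h with h | h | h
  · exact Or.inl h
  · exact Or.inr ⟨h.1, by omega⟩
  · exact Or.inr ⟨h.1, h.2.2.1⟩

lemma serving_bounds {m : ℕ} (hm : 1 ≤ m) (hmN : m ≤ S.N) :
    S.v m ≤ S.us m + 5 * S.ρ m ∧ S.us m ≤ S.v m ∧
      S.t m ≤ S.ss m + 5 * S.ρ m ∧ S.ss m ≤ S.t m := by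
  obtain ⟨-, h1, h2, h3, h4⟩ := S.serv_mem m hm hmN
  dsimp only at h1 h2 h3 h4
  omega

lemma mem_Repl_sol {m a b : ℕ} (hm : 1 ≤ m) (hmN : m ≤ S.N)
    (h : ((a, b) : Replica) ∈ Repl (S.sol m)) :
    ((a, b) : Replica) ∈ S.curRepl m ∨ (S.us m ≤ a ∧ a ≤ S.v m ∧ b ≤ S.t m) ∨
      (a = S.us m ∧ S.t m ≤ b ∧ b ≤ S.t m + 4 * S.ρ m) := by
  have := S.serving_bounds hm hmN
  rw [S.Repl_sol_eq hm hmN, added45, Repl_union, Repl_union] at h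
  simp only [Set.mem_union, mem_Repl_vertPath, mem_Repl_horizPath] at h
  rcases h with h | ((⟨rfl, rfl⟩ | h) | (⟨rfl, rfl⟩ | h)) | (⟨rfl, rfl⟩ | h)
  all_goals first
    | exact Or.inl (zero_mem_Repl _)
    | exact Or.inl h
    | omega

lemma mk_us_t_mem_Repl_sol {m : ℕ} (hm : 1 ≤ m) (hmN : m ≤ S.N) :
    ((S.us m, S.t m) : Replica) ∈ Repl (S.sol m) := by
  rcases (S.serving_bounds hm hmN).2.2.2.lt_or_eq with hlt | heq
  · rw [S.Repl_sol_eq hm hmN, added45, Repl_union, Repl_union]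
    exact Or.inr (Or.inl (Or.inl (mem_Repl_vertPath.2 (Or.inr ⟨rfl, hlt.le, le_rfl, hlt⟩))))
  · rw [← heq]
    exact S.curRepl_subset_Repl_sol hm hmN (S.serv_mem m hm hmN).1

lemma row_mem_Repl_sol {m w : ℕ} (hm : 1 ≤ m) (hmN : m ≤ S.N) (hw : S.us m ≤ w)
    (hw' : w ≤ S.v m) : ((w, S.t m) : Replica) ∈ Repl (S.sol m) := by
  rcases hw.lt_or_eq with hlt | rfl
  · rw [S.Repl_sol_eq hm hmN, added45, Repl_union, Repl_union]
    exact Or.inr (Or.inl (Or.inr (mem_Repl_horizPath.2 (Or.inr ⟨hw, hw', rfl, by omega⟩))))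
  · exact S.mk_us_t_mem_Repl_sol hm hmN

lemma col_mem_Repl_sol {m τ : ℕ} (hm : 1 ≤ m) (hmN : m ≤ S.N) (hτ : S.t m ≤ τ)
    (hτ' : τ ≤ S.t m + 4 * S.ρ m) : ((S.us m, τ) : Replica) ∈ Repl (S.sol m) := by
  rcases hτ.lt_or_eq with hlt | rfl
  · rw [S.Repl_sol_eq hm hmN, added45, Repl_union]
    exact Or.inr (Or.inr (mem_Repl_vertPath.2 (Or.inr ⟨rfl, hτ, hτ', by omega⟩)))
  · exact S.mk_us_t_mem_Repl_sol hm hmN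

lemma mk_zero_mem_Repl_sol {k c : ℕ} (hkN : k ≤ S.N) (hc : c ≤ S.t k) :
    ((0, c) : Replica) ∈ Repl (S.sol k) := by
  induction k with
  | zero =>
    obtain rfl : c = 0 := by have := S.t_zero; omega
    exact zero_mem_Repl _
  | succ k ih =>
    rcases le_or_gt c (S.t k) with hck | hck
    · exact Repl_mono (S.sol_mono k.le_succ hkN) (ih (by omega) hck)
    · refine S.curRepl_subset_Repl_sol (by omega) hkN ?_
      rw [curRepl, Nat.add_sub_cancel, Repl_union]
      exact Or.inr (mem_Repl_vertPath.2 (Or.inr ⟨rfl, hck.le, hc, by omega⟩))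

lemma mk_zero_t_mem_curRepl {i : ℕ} (hi : 1 ≤ i) (hiN : i ≤ S.N) :
    ((0, S.t i) : Replica) ∈ S.curRepl i := by
  rcases le_or_gt (S.t i) (S.t (i - 1)) with hle | hlt
  · exact S.Repl_sol_subset_curRepl (by omega) hiN (S.mk_zero_mem_Repl_sol (by omega) hle)
  · rw [curRepl, Repl_union]
    exact Or.inr (mem_Repl_vertPath.2 (Or.inr ⟨rfl, hlt.le, le_rfl, hlt⟩))

-- Replicas later than `t k` lie on SQ5 columns, which reach down to time `t k`.
lemma mk_mem_Repl_sol_of_le {k a b τ : ℕ} (hkN : k ≤ S.N)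
    (h : ((a, b) : Replica) ∈ Repl (S.sol k)) (hτ : S.t k ≤ τ) (hτb : τ ≤ b) :
    ((a, τ) : Replica) ∈ Repl (S.sol k) := by
  induction k with
  | zero =>
    simp only [S.sol_zero, mem_Repl_iff, Prod.mk.injEq, Finset.notMem_empty, false_and,
      exists_false, or_false] at h
    obtain ⟨rfl, rfl⟩ := h
    obtain rfl : τ = 0 := by omega
    exact zero_mem_Repl _
  | succ k ih =>
    have htk := S.t_mono k (k + 1) k.le_succ hkN
    rcases S.mem_Repl_sol (by omega) hkN h with hcur | ⟨-, -, hb⟩ | ⟨rfl, -, hb⟩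
    · rcases S.mem_curRepl hcur with hprev | ⟨-, hb⟩
      · exact Repl_mono (S.sol_mono k.le_succ hkN) (ih (by omega) hprev (by omega))
      · obtain rfl : τ = b := by omega
        exact h
    · obtain rfl : τ = b := by omega
      exact h
    · exact S.col_mem_Repl_sol (by omega) hkN hτ (by omega)

lemma mk_min_t_mem_curRepl {m a b : ℕ} (hm : 1 ≤ m) (hmN : m ≤ S.N)
    (h : ((a, b) : Replica) ∈ S.curRepl m) : ((a, min b (S.t m)) : Replica) ∈ S.curRepl m := by
  rcases le_total b (S.t m) with hb | hb
  · rwa [min_eq_left hb]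
  · rw [min_eq_right hb]
    rcases S.mem_curRepl h with hprev | ⟨-, hb'⟩
    · exact S.Repl_sol_subset_curRepl (by omega) hmN
        (S.mk_mem_Repl_sol_of_le (by omega) hprev (S.t_mono _ m (by omega) hmN) hb)
    · rwa [le_antisymm hb' hb] at h

lemma pos_rho_of_uncovered {i : ℕ} (hu : S.uncovered i) : 0 < S.ρ i := by
  unfold uncovered covered at hu
  omega

lemma add_rho_le_of_mem_curRepl {i a b : ℕ} (hi : 1 ≤ i) (hiN : i ≤ S.N)
    (h : ((a, b) : Replica) ∈ S.curRepl i) (ha : a ≤ S.v i) (hb : b ≤ S.t i)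
    (hbρ : S.t i < b + S.ρ i) : a + S.ρ i ≤ S.v i := by
  have := (le_distInf_iff ha hb).1 (S.rho_min i hi hiN _ h)
  omega

lemma covered_of_mem_curRepl {i a b : ℕ} (hi : 1 ≤ i) (hiN : i ≤ S.N)
    (h : ((a, b) : Replica) ∈ S.curRepl i) (ha : a + S.ρ i ≤ S.v i)
    (ha' : S.v i ≤ a + 5 * S.ρ i) (hb : S.t i ≤ b + 5 * S.ρ i) (hb' : b ≤ S.t i) :
    S.covered i := by
  have := S.serv_min i hi hiN _ h (by simp only [SqRect, Set.mem_ofPred_eq]; omega)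
  unfold covered
  omega

lemma rho_lt_v_of_uncovered {i : ℕ} (hi : 1 ≤ i) (hiN : i ≤ S.N) (hu : S.uncovered i) :
    S.ρ i < S.v i := by
  have h0 := S.mk_zero_t_mem_curRepl hi hiN
  have hρ := S.pos_rho_of_uncovered hu
  have hle := S.add_rho_le_of_mem_curRepl hi hiN h0 (Nat.zero_le _) le_rfl (by omega)
  by_contra! hge
  exact hu (S.covered_of_mem_curRepl hi hiN h0 hle (by omega) (by omega) le_rfl)

lemma add_rho_le_of_col {m i τ : ℕ} (hm : 1 ≤ m) (hmi : m < i) (hiN : i ≤ S.N)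
    (hτ : S.t m ≤ τ) (hτ' : τ ≤ S.t m + 4 * S.ρ m) (hτi : τ ≤ S.t i) (hτρ : S.t i < τ + S.ρ i)
    (hus : S.us m ≤ S.v i) : S.us m + S.ρ i ≤ S.v i :=
  S.add_rho_le_of_mem_curRepl (by omega) hiN
    (S.Repl_sol_subset_curRepl hmi hiN (S.col_mem_Repl_sol hm (by omega) hτ hτ')) hus hτi hτρ

lemma covered_of_row {m i : ℕ} (hm : 1 ≤ m) (hmi : m < i) (hiN : i ≤ S.N)
    (hus : S.us m + S.ρ i ≤ S.v i) (hv : S.v i ≤ S.v m + S.ρ i)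
    (ht : S.t i ≤ S.t m + 5 * S.ρ i) : S.covered i :=
  S.covered_of_mem_curRepl (by omega) hiN
    (S.Repl_sol_subset_curRepl hmi hiN (S.row_mem_Repl_sol hm (by omega) (w := S.v i - S.ρ i)
      (by omega) (by omega)))
    (by omega) (by omega) ht (S.t_mono m i hmi.le hiN)

theorem v_lt_us_of_uncovered {i j : ℕ} (hj : 1 ≤ j) (hji : j < i) (hiN : i ≤ S.N)
    (hui : S.uncovered i) (hρj : 0 < S.ρ j) (ht : S.t i ≤ S.t j + S.ρ i)
    (hv : S.v i ≤ S.v j + S.ρ i) : S.v i < S.us j := by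
  by_contra! hus
  have hρi := S.pos_rho_of_uncovered hui
  by_cases hrow : S.us j + S.ρ i ≤ S.v i
  · exact hui (S.covered_of_row hj hji hiN hrow hv (by omega))
  · have htji := S.t_mono j i hji.le hiN
    have := S.add_rho_le_of_col hj hji hiN (τ := min (S.t i) (S.t j + 4 * S.ρ j))
      (le_min htji (by omega)) (min_le_right _ _) (min_le_left _ _) (by omega) hus
    omega

theorem lt_t_of_mem_Repl_sol {i j k a b : ℕ} (hj : 1 ≤ j) (hjk : j ≤ k) (hki : k < i)
    (hiN : i ≤ S.N) (hui : S.uncovered i) (hvi : S.ρ i < S.v i) (hvus : S.v i < S.us j)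
    (ht : S.t i ≤ S.t j + S.ρ i) (hv : S.v j ≤ S.v i + S.ρ j) (hρ : S.ρ i < 4 * S.ρ j)
    (h : ((a, b) : Replica) ∈ Repl (S.sol k)) (ha : S.v i ≤ a + S.ρ i) (ha' : a ≤ S.v i) :
    b + 5 * S.ρ j < S.t j := by
  induction k, hjk using Nat.le_induction generalizing a b with
  | base =>
    have hjN : j ≤ S.N := by omega
    have husv := (S.serving_bounds hj hjN).2.1
    rcases S.mem_Repl_sol hj hjN h with hcur | ⟨hus, -⟩ | ⟨rfl, -⟩
    · by_contra! hb
      have := S.serv_min j hj hjN _ (S.mk_min_t_mem_curRepl hj hjN hcur)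
        (by simp only [SqRect, Set.mem_ofPred_eq]; omega)
      dsimp only at this
      omega
    all_goals omega
  | succ m hjm ih =>
    have hm : 1 ≤ m + 1 := by omega
    have hmN : m + 1 ≤ S.N := by omega
    obtain ⟨-, husv, hss, -⟩ := S.serving_bounds hm hmN
    have htjm := S.t_mono j (m + 1) (by omega) hmN
    have htmi := S.t_mono (m + 1) i (by omega) hiN
    have hnew : S.us (m + 1) ≤ S.v i → S.v i ≤ S.v (m + 1) + S.ρ i → False := by
      intro hus hvm
      by_cases hrow : S.us (m + 1) + S.ρ i ≤ S.v i
      · exact hui (S.covered_of_row hm (by omega) hiN hrow hvm (by omega))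
      rcases S.mem_curRepl (S.serv_mem (m + 1) hm hmN).1 with hserv | ⟨h0, -⟩
      · have hold := ih (by omega) hserv (by omega) hus
        have := S.add_rho_le_of_col hm (by omega) hiN (τ := S.t i) htmi (by omega) le_rfl
          (by omega) hus
        omega
      · omega
    rcases S.mem_Repl_sol hm hmN h with hcur | ⟨hus, hav, -⟩ | ⟨rfl, -⟩
    · rcases S.mem_curRepl hcur with hprev | ⟨rfl, -⟩
      · exact ih (by omega) hprev ha ha'
      · omega
    · exact (hnew (by omega) (by omega)).elim
    · exact (hnew ha' (by omega)).elim

theorem four_mul_rho_le_of_uncovered {i j : ℕ} (hj : 1 ≤ j) (hji : j < i) (hiN : i ≤ S.N)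
    (hui : S.uncovered i) (hvi : S.ρ i < S.v i) (hvus : S.v i < S.us j)
    (ht : S.t i ≤ S.t j + S.ρ i) (hv : S.v j ≤ S.v i + S.ρ j) : 4 * S.ρ j ≤ S.ρ i := by
  by_contra! hρ
  have hi : 1 ≤ i := by omega
  have htji := S.t_mono j i hji.le hiN
  obtain ⟨hu', -, hvu', hts'⟩ := le_of_distInf_eq (S.closest_dist i hi hiN)
  rcases S.mem_curRepl (S.closest_mem i hi hiN) with hprev | ⟨h0, -⟩
  · have := S.lt_t_of_mem_Repl_sol hj (k := i - 1) (by omega) (by omega) hiN hui hvi hvus ht hv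
      hρ hprev (by omega) hu'
    omega
  · omega

end SquareRun

/-- If the quarter balls of two uncovered requests `r_i, r_j` (with `i > j`) are
not edge-disjoint, then (P1) `ρ(i) ≥ 4ρ(j)` and
(P2) `v_j − ρ(j) ≤ v_i < u^s_j ≤ v_j`. -/
theorem uncovered_not_disjoint_props (S : SquareRun) (i j : ℕ)
    (hj1 : 1 ≤ j) (hji : j < i) (hiN : i ≤ S.N)
    (hui : S.uncovered i) (huj : S.uncovered j)
    (hnd : ¬ BallsEdgeDisjoint (S.req i) (S.ρ i) (S.req j) (S.ρ j)) :
    4 * S.ρ j ≤ S.ρ i ∧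
      (S.v j - S.ρ j ≤ S.v i ∧ S.v i < S.us j ∧ S.us j ≤ S.v j) := by
  obtain ⟨q, hqi, hqj⟩ := exists_mem_qball_of_not_disjoint hnd
  obtain ⟨hvi, hti⟩ := le_add_of_mem_qball hqi hqj
  obtain ⟨hvj, -⟩ := le_add_of_mem_qball hqj hqi
  have hP2 := S.v_lt_us_of_uncovered hj1 hji hiN hui (S.pos_rho_of_uncovered huj) hti hvi
  have hP1 := S.four_mul_rho_le_of_uncovered hj1 hji hiN hui
    (S.rho_lt_v_of_uncovered (by omega) hiN hui) hP2 hti hvj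
  exact ⟨hP1, by omega, hP2, (S.serving_bounds hj1 (by omega)).2.1⟩
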